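/- arXiv:1905.09763 — 3 statements merged into one kernel-verified Lean document; each statement's English description precedes it below -/
import Mathlib

section
/- Let G be a graph with Laplacian decomposition L = S S^T, rows s_i. Let i and j be distinct non-adjacent nodes with deg(i) > 0. Then the number of common neighbors of i and j equals -deg(i) * (C_{N(i)} · s_j), where C_{N(i)} is the centroid of the embeddings of the neighbors of i. -/
open Matrix

theorem glee_common_neighbors (n : ℕ) (G : SimpleGraph (Fin n))
    [DecidableRel G.Adj] (S : Matrix (Fin n) (Fin n) ℝ)
    (hS : G.lapMatrix ℝ = S * Sᵀ)
    (i j : Fin n) (hij : i ≠ j) (hnadj : ¬ G.Adj i j) (hdeg : 0 < G.degree i) :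
    ((G.neighborFinset i ∩ G.neighborFinset j).card : ℝ) =
      -(G.degree i : ℝ) *
        ((((G.degree i : ℝ)⁻¹ • ∑ k ∈ G.neighborFinset i, S k) : Fin n → ℝ) ⬝ᵥ S j) := by
  have key : ∀ k, S k ⬝ᵥ S j = (G.lapMatrix ℝ) k j := by
    intro k
    rw [hS]
    simp [Matrix.mul_apply, dotProduct, Matrix.transpose_apply]
  have hd : (G.degree i : ℝ) ≠ 0 := by positivity
  have hsum : (∑ k ∈ G.neighborFinset i, S k) ⬝ᵥ S j
      = -((G.neighborFinset i ∩ G.neighborFinset j).card : ℝ) := by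
    have swap : (∑ k ∈ G.neighborFinset i, S k) ⬝ᵥ S j
        = ∑ k ∈ G.neighborFinset i, S k ⬝ᵥ S j := by
      simp only [dotProduct, Finset.sum_apply, Finset.sum_mul]
      exact sum_dotProduct _ _ _
    rw [swap]
    simp_rw [key]
    have : ∀ k ∈ G.neighborFinset i, (G.lapMatrix ℝ) k j
        = if k ∈ G.neighborFinset j then (-1 : ℝ) else 0 := by
      intro k hk
      have hkj : k ≠ j := by
        rintro rfl
        exact hnadj ((SimpleGraph.mem_neighborFinset G i _).mp hk)
      simp [SimpleGraph.lapMatrix, SimpleGraph.degMatrix, hkj,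
        SimpleGraph.adjMatrix_apply, SimpleGraph.adj_comm]
      split_ifs <;> simp
    rw [Finset.sum_congr rfl this, Finset.sum_ite_mem]
    simp
  have : (((G.degree i : ℝ)⁻¹ • ∑ k ∈ G.neighborFinset i, S k) : Fin n → ℝ) ⬝ᵥ S j
      = (G.degree i : ℝ)⁻¹ * ((∑ k ∈ G.neighborFinset i, S k) ⬝ᵥ S j) := by
    simp [smul_dotProduct]
  rw [this, hsum]
  field_simp
end

section
/- Let G be a graph with Laplacian decomposition L = S S^T, rows s_i. For distinct nodes i and j with positive degrees, the number of walks of length three from i to j, i.e., (A^3)_{ij}, equals -deg(i) deg(j) (C_{N(i)} · C_{N(j)}) + sum over k in N(i) ∩ N(j) of ||s_k||^2. -/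
open Matrix

private lemma glee_dot_aux (n : ℕ) (c d : ℝ) (A B : Finset (Fin n))
    (f g : Fin n → (Fin n → ℝ)) :
    ((c • ∑ k ∈ A, f k : Fin n → ℝ)) ⬝ᵥ (d • ∑ l ∈ B, g l) =
      c * d * ∑ k ∈ A, ∑ l ∈ B, f k ⬝ᵥ g l := by
  simp only [dotProduct, Pi.smul_apply, Finset.sum_apply, smul_eq_mul, Finset.mul_sum,
    Finset.sum_mul]
  calc (∑ x : Fin n, ∑ l ∈ B, ∑ k ∈ A, c * f k x * (d * g l x))
      = ∑ l ∈ B, ∑ x : Fin n, ∑ k ∈ A, c * f k x * (d * g l x) := Finset.sum_comm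
    _ = ∑ l ∈ B, ∑ k ∈ A, ∑ x : Fin n, c * f k x * (d * g l x) :=
        Finset.sum_congr rfl fun _ _ => Finset.sum_comm
    _ = ∑ k ∈ A, ∑ l ∈ B, ∑ x : Fin n, c * f k x * (d * g l x) := Finset.sum_comm
    _ = ∑ k ∈ A, ∑ l ∈ B, ∑ x : Fin n, c * d * (f k x * g l x) :=
        Finset.sum_congr rfl fun _ _ => Finset.sum_congr rfl fun _ _ =>
          Finset.sum_congr rfl fun _ _ => by ring

theorem glee_paths_length_three (n : ℕ) (G : SimpleGraph (Fin n))
    [DecidableRel G.Adj] (S : Matrix (Fin n) (Fin n) ℝ)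
    (hS : G.lapMatrix ℝ = S * Sᵀ)
    (i j : Fin n) (hij : i ≠ j) (hi : 0 < G.degree i) (hj : 0 < G.degree j) :
    ((G.adjMatrix ℝ) ^ 3) i j =
      -((G.degree i : ℝ) * (G.degree j : ℝ)) *
        ((((G.degree i : ℝ)⁻¹ • ∑ k ∈ G.neighborFinset i, S k) : Fin n → ℝ) ⬝ᵥ
          ((G.degree j : ℝ)⁻¹ • ∑ k ∈ G.neighborFinset j, S k))
      + ∑ k ∈ G.neighborFinset i ∩ G.neighborFinset j, ∑ l, (S k l) ^ 2 := by
  have hdi : (G.degree i : ℝ) ≠ 0 := by positivity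
  have hdj : (G.degree j : ℝ) ≠ 0 := by positivity
  have hSS : ∀ k l, S k ⬝ᵥ S l = G.lapMatrix ℝ k l := by
    intro k l
    rw [hS]
    simp [Matrix.mul_apply, dotProduct, Matrix.transpose_apply]
  have hdot : (((G.degree i : ℝ)⁻¹ • ∑ k ∈ G.neighborFinset i, S k) : Fin n → ℝ) ⬝ᵥ
      ((G.degree j : ℝ)⁻¹ • ∑ k ∈ G.neighborFinset j, S k) =
      (G.degree i : ℝ)⁻¹ * (G.degree j : ℝ)⁻¹ *
        ∑ k ∈ G.neighborFinset i, ∑ l ∈ G.neighborFinset j, G.lapMatrix ℝ k l := by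
    refine (glee_dot_aux n (G.degree i : ℝ)⁻¹ (G.degree j : ℝ)⁻¹ (G.neighborFinset i)
      (G.neighborFinset j) (fun k => S k) (fun k => S k)).trans ?_
    simp_rw [hSS]
  rw [hdot]
  have hnorm : ∀ k, (∑ l, (S k l) ^ 2) = G.lapMatrix ℝ k k := by
    intro k
    rw [← hSS k k]
    simp [dotProduct, sq]
  simp_rw [hnorm]
  have hlap : ∀ k l : Fin n, G.lapMatrix ℝ k l =
      (if k = l then (G.degree k : ℝ) else 0) - G.adjMatrix ℝ k l := by
    intro k l
    simp [SimpleGraph.lapMatrix, SimpleGraph.degMatrix, Matrix.sub_apply,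
      Matrix.diagonal_apply]
  have hA : (∑ k ∈ G.neighborFinset i, ∑ l ∈ G.neighborFinset j,
        if k = l then (G.degree k : ℝ) else 0)
      = ∑ k ∈ G.neighborFinset i ∩ G.neighborFinset j, G.lapMatrix ℝ k k := by
    simp_rw [Finset.sum_ite_eq]
    rw [← Finset.sum_filter, Finset.filter_mem_eq_inter]
    refine Finset.sum_congr rfl fun k hk => ?_
    rw [hlap]
    simp
  have hsum : ∑ k ∈ G.neighborFinset i, ∑ l ∈ G.neighborFinset j, G.lapMatrix ℝ k l =
      (∑ k ∈ G.neighborFinset i ∩ G.neighborFinset j, G.lapMatrix ℝ k k)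
        - ∑ k ∈ G.neighborFinset i, ∑ l ∈ G.neighborFinset j, G.adjMatrix ℝ k l := by
    rw [← hA, ← Finset.sum_sub_distrib]
    refine Finset.sum_congr rfl fun k _ => ?_
    rw [← Finset.sum_sub_distrib]
    exact Finset.sum_congr rfl fun l _ => hlap k l
  rw [hsum]
  have hcube : ((G.adjMatrix ℝ) ^ 3) i j =
      ∑ k ∈ G.neighborFinset i, ∑ l ∈ G.neighborFinset j, G.adjMatrix ℝ k l := by
    rw [pow_succ, SimpleGraph.mul_adjMatrix_apply]
    rw [Finset.sum_comm (f := fun k l => G.adjMatrix ℝ k l)]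
    refine Finset.sum_congr rfl fun l _ => ?_
    rw [sq, SimpleGraph.adjMatrix_mul_apply]
  rw [hcube]
  field_simp
  ring
end

section
/- If Y* is a matrix whose columns are eigenvectors of L corresponding to its d largest eigenvalues λ_1 ≥ ... ≥ λ_d, scaled so that (Y*)^T Y* = Λ (diagonal with entries λ_1,...,λ_d), then Y* maximizes tr(Y^T L Y) over all n×d matrices Y with Y^T Y = Λ, and the maximum value is λ_1^2 + ... + λ_d^2. -/
open Matrix


lemma abel_compare : ∀ (d : ℕ) (b μ a : ℕ → ℝ),
    (∀ j k, j ≤ k → k < d → b k ≤ b j) →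
    (∀ k, k < d → 0 ≤ b k) →
    (∀ m, m ≤ d → ∑ k ∈ Finset.range m, μ k ≤ ∑ k ∈ Finset.range m, a k) →
    ∑ k ∈ Finset.range d, b k * μ k ≤ ∑ k ∈ Finset.range d, b k * a k := by
  intro d
  induction d with
  | zero => simp
  | succ d ih =>
    intro b μ a hmono hnn hpart
    have ht : 0 ≤ b d := hnn d (Nat.lt_succ_self d)
    have e1 : ∀ (f : ℕ → ℝ), ∑ k ∈ Finset.range (d+1), b k * f k
        = ∑ k ∈ Finset.range d, (b k - b d) * f k + b d * ∑ k ∈ Finset.range (d+1), f k := by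
      intro f
      have h : ∀ k, b k * f k = (b k - b d) * f k + b d * f k := fun k => by ring
      simp_rw [h]
      rw [Finset.sum_add_distrib, ← Finset.mul_sum, Finset.sum_range_succ _ d, sub_self,
        zero_mul, add_zero]
    have h1 : ∑ k ∈ Finset.range d, (b k - b d) * μ k
        ≤ ∑ k ∈ Finset.range d, (b k - b d) * a k := by
      apply ih
      · intro j k hjk hk
        have := hmono j k hjk (hk.trans (Nat.lt_succ_self d)); linarith
      · intro k hk
        have := hmono k d (Nat.le_of_lt hk) (Nat.lt_succ_self d); linarith
      · intro m hm; exact hpart m (hm.trans (Nat.le_succ d))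
    have h2 : ∑ k ∈ Finset.range (d+1), μ k ≤ ∑ k ∈ Finset.range (d+1), a k :=
      hpart (d+1) le_rfl
    rw [e1 μ, e1 a]
    exact add_le_add h1 (mul_le_mul_of_nonneg_left h2 ht)

lemma bessel_bound (n : ℕ) (u : ℕ → ℕ → ℝ) (F : Finset ℕ) (i : ℕ) (hi : i < n)
    (horth : ∀ k ∈ F, ∀ l ∈ F, k ≠ l → ∑ j ∈ Finset.range n, u j k * u j l = 0)
    (hdiag : ∀ k ∈ F, ∀ j : ℕ,
      u j k ^ 2 * (∑ j' ∈ Finset.range n, u j' k * u j' k) = u j k ^ 2) :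
    ∑ k ∈ F, u i k ^ 2 ≤ 1 := by
  set s : ℕ → ℝ := fun j => ∑ k ∈ F, u i k * u j k with hs
  have key : (0:ℝ) ≤ ∑ j ∈ Finset.range n, ((if j = i then (1:ℝ) else 0) - s j) ^ 2 :=
    Finset.sum_nonneg fun j _ => sq_nonneg _
  have expand : ∑ j ∈ Finset.range n, ((if j = i then (1:ℝ) else 0) - s j) ^ 2
      = (∑ j ∈ Finset.range n, (if j = i then (1:ℝ) else 0) ^ 2)
        - 2 * (∑ j ∈ Finset.range n, (if j = i then (1:ℝ) else 0) * s j)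
        + ∑ j ∈ Finset.range n, s j ^ 2 := by
    rw [Finset.mul_sum, ← Finset.sum_sub_distrib, ← Finset.sum_add_distrib]
    exact Finset.sum_congr rfl fun j _ => by ring
  have he2 : ∑ j ∈ Finset.range n, (if j = i then (1:ℝ) else 0) ^ 2 = 1 := by
    have : ∀ j, (if j = i then (1:ℝ) else 0) ^ 2 = if j = i then (1:ℝ) else 0 := by
      intro j; split <;> norm_num
    simp_rw [this]
    rw [Finset.sum_ite_eq' (Finset.range n) i (fun _ => (1:ℝ))]
    simp [hi]
  have hes : ∑ j ∈ Finset.range n, (if j = i then (1:ℝ) else 0) * s j = s i := by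
    simp_rw [ite_mul, one_mul, zero_mul]
    rw [Finset.sum_ite_eq' (Finset.range n) i s]
    simp [hi]
  have hs2 : ∑ j ∈ Finset.range n, s j ^ 2 = ∑ k ∈ F, u i k ^ 2 := by
    have hstep : ∀ j, s j ^ 2 = ∑ k ∈ F, ∑ l ∈ F, u i k * u i l * (u j k * u j l) := by
      intro j
      rw [sq, hs, Finset.sum_mul_sum]
      exact Finset.sum_congr rfl fun k _ => Finset.sum_congr rfl fun l _ => by ring
    simp_rw [hstep]
    rw [Finset.sum_comm]
    refine Finset.sum_congr rfl fun k hk => ?_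
    rw [Finset.sum_comm]
    have hinner : ∀ l ∈ F, ∑ j ∈ Finset.range n, u i k * u i l * (u j k * u j l)
        = u i k * u i l * ∑ j ∈ Finset.range n, u j k * u j l := by
      intro l _; rw [Finset.mul_sum]
    rw [Finset.sum_congr rfl hinner, Finset.sum_eq_single k]
    · have := hdiag k hk i
      calc u i k * u i k * ∑ j ∈ Finset.range n, u j k * u j k
          = u i k ^ 2 * ∑ j ∈ Finset.range n, u j k * u j k := by ring
        _ = u i k ^ 2 := this
    · intro l hl hlk
      rw [horth k hk l hl (Ne.symm hlk), mul_zero]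
    · intro hk'; exact absurd hk hk'
  have hsi : s i = ∑ k ∈ F, u i k ^ 2 := by
    simp only [hs]; exact Finset.sum_congr rfl fun k _ => (sq (u i k)).symm
  rw [expand, he2, hes, hs2, hsi] at key
  linarith

lemma core_nat (n d : ℕ) (hd : d ≤ n) (lam : ℕ → ℝ)
    (hmono : ∀ i j, i ≤ j → j < n → lam j ≤ lam i) (hnn : ∀ i, i < n → 0 ≤ lam i)
    (Z : ℕ → ℕ → ℝ)
    (horth : ∀ k l, k < d → l < d →
      ∑ i ∈ Finset.range n, Z i k * Z i l = if k = l then lam k else 0) :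
    ∑ k ∈ Finset.range d, ∑ i ∈ Finset.range n, lam i * Z i k ^ 2
      ≤ ∑ k ∈ Finset.range d, lam k ^ 2 := by
  set u : ℕ → ℕ → ℝ := fun i k => Z i k / Real.sqrt (lam k) with hu
  set μ : ℕ → ℝ := fun k => ∑ i ∈ Finset.range n, lam i * u i k ^ 2 with hμ
  -- zero columns
  have hzero : ∀ k, k < d → lam k = 0 → ∀ i, i < n → Z i k = 0 := by
    intro k hk h0 i hi
    have h := horth k k hk hk
    rw [if_pos rfl, h0] at h
    have := (Finset.sum_eq_zero_iff_of_nonneg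
      (fun j _ => mul_self_nonneg (Z j k))).mp h i (Finset.mem_range.mpr hi)
    exact mul_self_eq_zero.mp this
  have huzero : ∀ i k, lam k = 0 → u i k = 0 := by
    intro i k h0; simp [hu, h0]
  -- orthonormality of u
  have horthu : ∀ k l, k < d → l < d →
      ∑ i ∈ Finset.range n, u i k * u i l
        = if k = l ∧ lam k ≠ 0 then 1 else 0 := by
    intro k l hk hl
    by_cases hkl : k = l
    · subst hkl
      by_cases h0 : lam k = 0
      · rw [if_neg (by simp [h0])]
        exact Finset.sum_eq_zero fun i _ => by rw [huzero i k h0, zero_mul]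
      · have hpos : 0 < lam k := lt_of_le_of_ne (hnn k (lt_of_lt_of_le hk hd)) (Ne.symm h0)
        have hsq : Real.sqrt (lam k) * Real.sqrt (lam k) = lam k :=
          Real.mul_self_sqrt hpos.le
        have : ∀ i, u i k * u i k = Z i k * Z i k / lam k := by
          intro i; simp only [hu]; rw [div_mul_div_comm, hsq]
        rw [Finset.sum_congr rfl fun i _ => this i, ← Finset.sum_div,
          horth k k hk hk, if_pos rfl, div_self h0]
        simp [h0]
    · have : ∀ i, u i k * u i l
          = Z i k * Z i l / (Real.sqrt (lam k) * Real.sqrt (lam l)) := by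
        intro i; rw [hu]; ring
      rw [Finset.sum_congr rfl fun i _ => this i, ← Finset.sum_div,
        horth k l hk hl, if_neg hkl, zero_div, if_neg (by tauto)]
  -- lam k * μ k recovers the column contribution
  have hA : ∀ k, k < d → lam k * μ k = ∑ i ∈ Finset.range n, lam i * Z i k ^ 2 := by
    intro k hk
    by_cases h0 : lam k = 0
    · rw [h0, zero_mul]
      symm
      apply Finset.sum_eq_zero
      intro i hi
      rw [hzero k hk h0 i (Finset.mem_range.mp hi)]; ring
    · have hpos : 0 < lam k := lt_of_le_of_ne (hnn k (lt_of_lt_of_le hk hd)) (Ne.symm h0)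
      have hsq : Real.sqrt (lam k) ^ 2 = lam k := Real.sq_sqrt hpos.le
      rw [hμ, Finset.mul_sum]
      refine Finset.sum_congr rfl fun i _ => ?_
      simp only [hu, div_pow, hsq]
      field_simp
      try ring
  -- Ky Fan partial sums
  have hkyfan : ∀ m, m ≤ d → ∑ k ∈ Finset.range m, μ k ≤ ∑ i ∈ Finset.range m, lam i := by
    intro m hm
    set c : ℕ → ℝ := fun i => ∑ k ∈ Finset.range m, u i k ^ 2 with hc
    have hswap : ∑ k ∈ Finset.range m, μ k = ∑ i ∈ Finset.range n, lam i * c i := by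
      rw [hμ]
      simp only []
      rw [Finset.sum_comm]
      exact Finset.sum_congr rfl fun i _ => (Finset.mul_sum _ _ _).symm
    have hc1 : ∀ i, i < n → c i ≤ 1 := by
      intro i hi
      apply bessel_bound n u (Finset.range m) i hi
      · intro k hk l hl hkl
        rw [horthu k l (lt_of_lt_of_le (Finset.mem_range.mp hk) hm)
          (lt_of_lt_of_le (Finset.mem_range.mp hl) hm), if_neg (by tauto)]
      · intro k hk j
        have hkd := lt_of_lt_of_le (Finset.mem_range.mp hk) hm
        by_cases h0 : lam k = 0
        · rw [huzero j k h0]; ring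
        · rw [horthu k k hkd hkd, if_pos ⟨rfl, h0⟩, mul_one]
    have hcnn : ∀ i, 0 ≤ c i := fun i => Finset.sum_nonneg fun k _ => sq_nonneg _
    have hcsum : ∑ i ∈ Finset.range n, c i ≤ (m : ℝ) := by
      rw [hc]
      simp only []
      rw [Finset.sum_comm]
      have : ∀ k ∈ Finset.range m, ∑ i ∈ Finset.range n, u i k ^ 2 ≤ 1 := by
        intro k hk
        have hkd := lt_of_lt_of_le (Finset.mem_range.mp hk) hm
        have := horthu k k hkd hkd
        rw [Finset.sum_congr rfl fun i (_ : i ∈ Finset.range n) => sq (u i k)]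
        rw [this]
        split <;> norm_num
      calc ∑ k ∈ Finset.range m, ∑ i ∈ Finset.range n, u i k ^ 2
          ≤ ∑ k ∈ Finset.range m, (1:ℝ) := Finset.sum_le_sum this
        _ = (m : ℝ) := by simp
    rw [hswap]
    rcases lt_or_eq_of_le (hm.trans hd) with hmn | hmn
    · set t := lam m with ht
      have ht0 : 0 ≤ t := hnn m hmn
      have key : ∀ i ∈ Finset.range n, lam i * c i
          ≤ (if i < m then lam i - t else 0) + t * c i := by
        intro i hi
        have hin := Finset.mem_range.mp hi
        by_cases him : i < m
        · rw [if_pos him]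
          have h1 : t ≤ lam i := hmono i m (le_of_lt him) hmn
          have h2 := hc1 i hin
          nlinarith [mul_nonneg (sub_nonneg.mpr h1) (sub_nonneg.mpr h2)]
        · rw [if_neg him, zero_add]
          exact mul_le_mul_of_nonneg_right (hmono m i (le_of_not_gt him) hin) (hcnn i)
      calc ∑ i ∈ Finset.range n, lam i * c i
          ≤ ∑ i ∈ Finset.range n, ((if i < m then lam i - t else 0) + t * c i) :=
            Finset.sum_le_sum key
        _ = (∑ i ∈ Finset.range n, if i < m then lam i - t else 0)
            + t * ∑ i ∈ Finset.range n, c i := by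
            rw [Finset.sum_add_distrib, Finset.mul_sum]
        _ ≤ (∑ i ∈ Finset.range m, (lam i - t)) + t * m := by
            have hsub : (∑ i ∈ Finset.range n, if i < m then lam i - t else 0)
                = ∑ i ∈ Finset.range m, (lam i - t) := by
              rw [← Finset.sum_subset (Finset.range_subset_range.mpr (hm.trans hd))]
              · exact Finset.sum_congr rfl fun i hi => if_pos (Finset.mem_range.mp hi)
              · intro i _ hi
                exact if_neg (fun h => hi (Finset.mem_range.mpr h))
            rw [hsub]
            exact add_le_add_right (mul_le_mul_of_nonneg_left hcsum ht0) _
        _ = ∑ i ∈ Finset.range m, lam i := by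
            rw [Finset.sum_sub_distrib, Finset.sum_const, Finset.card_range,
              nsmul_eq_mul]
            ring
    · -- m = n
      have : ∀ i ∈ Finset.range n, lam i * c i ≤ lam i := by
        intro i hi
        have hin := Finset.mem_range.mp hi
        calc lam i * c i ≤ lam i * 1 :=
              mul_le_mul_of_nonneg_left (hc1 i hin) (hnn i hin)
          _ = lam i := mul_one _
      rw [hmn]
      exact le_trans (Finset.sum_le_sum this) le_rfl
  -- combine
  have hrw : ∑ k ∈ Finset.range d, ∑ i ∈ Finset.range n, lam i * Z i k ^ 2
      = ∑ k ∈ Finset.range d, lam k * μ k :=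
    Finset.sum_congr rfl fun k hk => (hA k (Finset.mem_range.mp hk)).symm
  rw [hrw]
  calc ∑ k ∈ Finset.range d, lam k * μ k
      ≤ ∑ k ∈ Finset.range d, lam k * lam k := by
        apply abel_compare d lam μ lam
        · intro j k hjk hk; exact hmono j k hjk (lt_of_lt_of_le hk hd)
        · intro k hk; exact hnn k (lt_of_lt_of_le hk hd)
        · exact hkyfan
    _ = ∑ k ∈ Finset.range d, lam k ^ 2 :=
        Finset.sum_congr rfl fun k _ => (sq (lam k)).symm

theorem glee_trace_maximization (n d : ℕ) (hd : d ≤ n)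
    (L P : Matrix (Fin n) (Fin n) ℝ) (hL : L.PosSemidef)
    (lam : Fin n → ℝ) (hmono : ∀ i j : Fin n, i ≤ j → lam j ≤ lam i)
    (hP : Pᵀ * P = 1) (hdecomp : L = P * Matrix.diagonal lam * Pᵀ)
    (Yopt : Matrix (Fin n) (Fin d) ℝ)
    (hcols : ∀ k : Fin d, L *ᵥ (fun i => Yopt i k) = lam (Fin.castLE hd k) • (fun i => Yopt i k))
    (hscale : Yoptᵀ * Yopt = Matrix.diagonal (fun k : Fin d => lam (Fin.castLE hd k))) :
    (∀ Y : Matrix (Fin n) (Fin d) ℝ,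
        Yᵀ * Y = Matrix.diagonal (fun k : Fin d => lam (Fin.castLE hd k)) →
        (Yᵀ * L * Y).trace ≤ (Yoptᵀ * L * Yopt).trace) ∧
    (Yoptᵀ * L * Yopt).trace = ∑ k : Fin d, (lam (Fin.castLE hd k)) ^ 2 := by
  have hPPT : P * Pᵀ = 1 := mul_eq_one_comm.mp hP
  -- eigenvalues are nonnegative
  have hDps : (Matrix.diagonal lam).PosSemidef := by
    have hPH : Pᴴ = Pᵀ := rfl
    have h1 : (Pᵀ * L * P).PosSemidef := by
      rw [← hPH]; exact hL.conjTranspose_mul_mul_same P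
    have h2 : Pᵀ * L * P = Matrix.diagonal lam := by
      rw [hdecomp]
      simp only [← Matrix.mul_assoc]
      rw [hP, Matrix.one_mul, Matrix.mul_assoc, hP, Matrix.mul_one]
    rwa [h2] at h1
  have hnn : ∀ i, 0 ≤ lam i := Matrix.posSemidef_diagonal_iff.mp hDps
  -- value at Yopt
  have hLY : L * Yopt = Yopt * Matrix.diagonal (fun k : Fin d => lam (Fin.castLE hd k)) := by
    ext i k
    have h := congrFun (hcols k) i
    simp only [Matrix.mulVec, dotProduct, Pi.smul_apply, smul_eq_mul] at h
    rw [Matrix.mul_apply, Matrix.mul_diagonal]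
    exact h.trans (mul_comm _ _)
  have hval : (Yoptᵀ * L * Yopt).trace = ∑ k : Fin d, (lam (Fin.castLE hd k)) ^ 2 := by
    rw [Matrix.mul_assoc, hLY, ← Matrix.mul_assoc, hscale, Matrix.diagonal_mul_diagonal,
      Matrix.trace_diagonal]
    exact Finset.sum_congr rfl fun k _ => (sq _).symm
  refine ⟨fun Y hY => ?_, hval⟩
  rw [hval]
  set Zm := Pᵀ * Y with hZm
  have hZorth : Zmᵀ * Zm = Matrix.diagonal (fun k : Fin d => lam (Fin.castLE hd k)) := by
    rw [hZm, Matrix.transpose_mul, Matrix.transpose_transpose]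
    calc Yᵀ * P * (Pᵀ * Y) = Yᵀ * (P * Pᵀ) * Y := by
          rw [Matrix.mul_assoc, ← Matrix.mul_assoc P, ← Matrix.mul_assoc]
      _ = Matrix.diagonal (fun k : Fin d => lam (Fin.castLE hd k)) := by
          rw [hPPT, Matrix.mul_one, hY]
  have htr : (Yᵀ * L * Y).trace = ∑ k : Fin d, ∑ i : Fin n, lam i * Zm i k ^ 2 := by
    have hLrw : Yᵀ * L * Y = Zmᵀ * (Matrix.diagonal lam * Zm) := by
      rw [hdecomp, hZm, Matrix.transpose_mul, Matrix.transpose_transpose]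
      simp only [Matrix.mul_assoc]
    rw [hLrw, Matrix.trace]
    refine Finset.sum_congr rfl fun k _ => ?_
    rw [Matrix.diag_apply, Matrix.mul_apply]
    refine Finset.sum_congr rfl fun i _ => ?_
    rw [Matrix.transpose_apply, Matrix.diagonal_mul]
    ring
  rw [htr]
  -- bridge to ℕ-indexed data
  set lamN : ℕ → ℝ := fun i => if h : i < n then lam ⟨i, h⟩ else 0 with hlamN
  set ZN : ℕ → ℕ → ℝ :=
    fun i k => if h : i < n then if h2 : k < d then Zm ⟨i, h⟩ ⟨k, h2⟩ else 0 else 0 with hZN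
  have hcore : ∑ k ∈ Finset.range d, ∑ i ∈ Finset.range n, lamN i * ZN i k ^ 2
      ≤ ∑ k ∈ Finset.range d, lamN k ^ 2 := by
    apply core_nat n d hd lamN
    · intro i j hij hj
      have hi : i < n := lt_of_le_of_lt hij hj
      simp only [hlamN, dif_pos hi, dif_pos hj]
      exact hmono ⟨i, hi⟩ ⟨j, hj⟩ hij
    · intro i hi
      simp only [hlamN, dif_pos hi]
      exact hnn _
    · intro k l hk hl
      have h := congrFun (congrFun hZorth ⟨k, hk⟩) ⟨l, hl⟩
      rw [Matrix.mul_apply] at h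
      simp only [Matrix.transpose_apply, Matrix.diagonal_apply] at h
      rw [← Fin.sum_univ_eq_sum_range (fun i => ZN i k * ZN i l) n]
      have heq : ∀ i : Fin n, ZN (i : ℕ) k * ZN (i : ℕ) l = Zm i ⟨k, hk⟩ * Zm i ⟨l, hl⟩ := by
        intro i
        simp only [hZN, dif_pos i.isLt, dif_pos hk, dif_pos hl, Fin.eta]
      rw [Finset.sum_congr rfl fun i _ => heq i, h]
      by_cases hkl : k = l
      · subst hkl
        rw [if_pos rfl, if_pos rfl]
        simp only [hlamN, dif_pos (lt_of_lt_of_le hk hd)]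
        rfl
      · rw [if_neg (by simp [Fin.mk.injEq, hkl]), if_neg hkl]
  have hL1 : ∑ k : Fin d, ∑ i : Fin n, lam i * Zm i k ^ 2
      = ∑ k ∈ Finset.range d, ∑ i ∈ Finset.range n, lamN i * ZN i k ^ 2 := by
    rw [← Fin.sum_univ_eq_sum_range (fun k => ∑ i ∈ Finset.range n, lamN i * ZN i k ^ 2) d]
    refine Finset.sum_congr rfl fun k _ => ?_
    rw [← Fin.sum_univ_eq_sum_range (fun i => lamN i * ZN i (k : ℕ) ^ 2) n]
    refine Finset.sum_congr rfl fun i _ => ?_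
    simp only [hlamN, hZN, dif_pos i.isLt, dif_pos k.isLt, Fin.eta]
  have hL2 : ∑ k : Fin d, (lam (Fin.castLE hd k)) ^ 2 = ∑ k ∈ Finset.range d, lamN k ^ 2 := by
    rw [← Fin.sum_univ_eq_sum_range (fun k => lamN k ^ 2) d]
    refine Finset.sum_congr rfl fun k _ => ?_
    simp only [hlamN, dif_pos (lt_of_lt_of_le k.isLt hd)]
    rfl
  rw [hL1, hL2]
  exact hcore
end
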